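/- arXiv:math/9806147 — 2 statements merged into one kernel-verified Lean document; each statement's English description precedes it below -/
import Mathlib

section
/- Let K be any field, let k ≥ 1, and let a, b, c be natural numbers with c ≥ 1, b ≥ 2c + k − 1 and b ≥ a + c. Then there exist matrices A ∈ Mat_{b×a}(K[x_0,…,x_k]) and B ∈ Mat_{c×b}(K[x_0,…,x_k]) with all entries homogeneous of degree 1, such that B·A = 0, rank A(x) = a for at least one point x ∈ K^{k+1}, and rank B(x) = c for every nonzero x ∈ K^{k+1}. -/
open MvPolynomial

noncomputable def mvar (K : Type*) [Field K] (k t : ℕ) : MvPolynomial (Fin (k+1)) K :=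
  if h : t < k + 1 then MvPolynomial.X ⟨t, h⟩ else 0

lemma mvar_hom (K : Type*) [Field K] (k t : ℕ) : (mvar K k t).IsHomogeneous 1 := by
  unfold mvar; split
  · exact isHomogeneous_X _ _
  · exact isHomogeneous_zero _ _ _

lemma eval_mvar (K : Type*) [Field K] (k t : ℕ) (x : Fin (k+1) → K) :
    MvPolynomial.eval x (mvar K k t) = if h : t < k + 1 then x ⟨t, h⟩ else 0 := by
  unfold mvar; split <;> simp

lemma rank_eq_of_left_inv {K : Type*} [Field K] {m n : ℕ}
    {A : Matrix (Fin m) (Fin n) K} (C : Matrix (Fin n) (Fin m) K) (h : C * A = 1) :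
    A.rank = n := by
  refine le_antisymm (Matrix.rank_le_width A) ?_
  calc n = (1 : Matrix (Fin n) (Fin n) K).rank := by simp [Matrix.rank_one]
    _ = (C * A).rank := by rw [h]
    _ ≤ A.rank := Matrix.rank_mul_le_right _ _

lemma rank_eq_of_mul_unit {K : Type*} [Field K] {m n : ℕ}
    {B : Matrix (Fin m) (Fin n) K} (E : Matrix (Fin n) (Fin m) K)
    (h : IsUnit (B * E)) : B.rank = m := by
  refine le_antisymm ?_ ?_
  · simpa using Matrix.rank_le_card_height B
  · calc m = (B * E).rank := by rw [Matrix.rank_of_isUnit _ h, Fintype.card_fin]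
      _ ≤ B.rank := Matrix.rank_mul_le_left _ _

lemma isUnit_of_triangular {K : Type*} [Field K] {c : ℕ} (M : Matrix (Fin c) (Fin c) K) (u : K)
    (hu : u ≠ 0) (hd : ∀ i, M i i = u) (hup : ∀ i j : Fin c, i < j → M i j = 0) : IsUnit M := by
  rw [Matrix.isUnit_iff_isUnit_det,
    Matrix.det_of_lowerTriangular M (fun i j h => hup i j (OrderDual.toDual_lt_toDual.mp h))]
  have hprod : ∏ i : Fin c, M i i = u ^ Fintype.card (Fin c) := by
    rw [Finset.prod_congr rfl (fun i _ => hd i), Finset.prod_const, Finset.card_univ]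
  rw [hprod]
  exact isUnit_iff_ne_zero.mpr (pow_ne_zero _ hu)


set_option maxHeartbeats 2000000 in
/-- Existence of a linear monad `O(-1)^a → O^b → O(1)^c` on `P^k` over any field `K`
when `b ≥ 2c + k - 1` and `b ≥ a + c`. -/
theorem monad_exists_of_ge (K : Type*) [Field K]
    (k a b c : ℕ) (hk : 1 ≤ k) (hc : 1 ≤ c)
    (hb1 : b ≥ 2 * c + k - 1) (hb2 : b ≥ a + c) :
    ∃ (A : Matrix (Fin b) (Fin a) (MvPolynomial (Fin (k + 1)) K))
      (B : Matrix (Fin c) (Fin b) (MvPolynomial (Fin (k + 1)) K)),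
      (∀ i j, (A i j).IsHomogeneous 1) ∧
      (∀ i j, (B i j).IsHomogeneous 1) ∧
      B * A = 0 ∧
      (∃ x : Fin (k + 1) → K, (A.map (MvPolynomial.eval x)).rank = a) ∧
      (∀ x : Fin (k + 1) → K, x ≠ 0 → (B.map (MvPolynomial.eval x)).rank = c) := by
  refine ⟨Matrix.of (fun i l =>
      if (l : ℕ) < c + k - 1 then
        (if (i : ℕ) = l then mvar K k k
         else if c + k - 1 ≤ (i : ℕ) ∧ (i : ℕ) - (c + k - 1) ≤ (l : ℕ) ∧
             (l : ℕ) ≤ k - 1 + ((i : ℕ) - (c + k - 1)) ∧ (i : ℕ) < 2 * c + k - 1 then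
           -mvar K k ((l : ℕ) - ((i : ℕ) - (c + k - 1)))
         else 0)
      else if (i : ℕ) = (l : ℕ) + c then mvar K k k else 0),
    Matrix.of (fun i j =>
      if (j : ℕ) < c + k - 1 then
        (if (i : ℕ) ≤ (j : ℕ) ∧ (j : ℕ) ≤ k - 1 + (i : ℕ) then mvar K k ((j : ℕ) - (i : ℕ))
         else 0)
      else if (j : ℕ) = c + k - 1 + (i : ℕ) then mvar K k k else 0),
    ?hA, ?hB, ?hBA, ?hrkA, ?hrkB⟩
  case hA =>
    intro i l
    simp only [Matrix.of_apply]
    split_ifs <;>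
      first
        | exact mvar_hom K k _
        | exact (mvar_hom K k _).neg
        | exact isHomogeneous_zero _ _ _
  case hB =>
    intro i j
    simp only [Matrix.of_apply]
    split_ifs <;>
      first
        | exact mvar_hom K k _
        | exact isHomogeneous_zero _ _ _
  case hBA =>
    apply Matrix.ext
    intro i l
    rw [Matrix.mul_apply, Matrix.zero_apply]
    simp only [Matrix.of_apply]
    have hib := i.isLt
    have hlb := l.isLt
    by_cases hl : (l : ℕ) < c + k - 1
    · set E : MvPolynomial (Fin (k+1)) K :=
        if (i : ℕ) ≤ (l : ℕ) ∧ (l : ℕ) ≤ k - 1 + (i : ℕ) then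
          mvar K k ((l : ℕ) - (i : ℕ)) * mvar K k k else 0 with hE
      have key : ∀ j : Fin b,
          (if (j : ℕ) < c + k - 1 then
            (if (i : ℕ) ≤ (j : ℕ) ∧ (j : ℕ) ≤ k - 1 + (i : ℕ) then
              mvar K k ((j : ℕ) - (i : ℕ)) else 0)
           else if (j : ℕ) = c + k - 1 + (i : ℕ) then mvar K k k else 0) *
          (if (l : ℕ) < c + k - 1 then
            (if (j : ℕ) = (l : ℕ) then mvar K k k
             else if c + k - 1 ≤ (j : ℕ) ∧ (j : ℕ) - (c + k - 1) ≤ (l : ℕ) ∧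
                 (l : ℕ) ≤ k - 1 + ((j : ℕ) - (c + k - 1)) ∧ (j : ℕ) < 2 * c + k - 1 then
               -mvar K k ((l : ℕ) - ((j : ℕ) - (c + k - 1)))
             else 0)
           else if (j : ℕ) = (l : ℕ) + c then mvar K k k else 0) =
          (if (j : ℕ) = (l : ℕ) then E else 0) -
          (if (j : ℕ) = c + k - 1 + (i : ℕ) then E else 0) := by
        intro j
        have hjb := j.isLt
        rw [hE]
        split_ifs <;>
          first
            | ring1
            | (exfalso; omega)
            | (rw [show ((j : ℕ) - (i : ℕ)) = ((l : ℕ) - (i : ℕ)) from by omega]; ring1)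
            | (rw [show ((l : ℕ) - ((j : ℕ) - (c + k - 1))) = ((l : ℕ) - (i : ℕ)) from by omega];
               ring1)
      rw [Finset.sum_congr rfl (fun j _ => key j), Finset.sum_sub_distrib]
      have hsum : ∀ (m : ℕ) (hm : m < b),
          (∑ j : Fin b, if (j : ℕ) = m then E else 0) = E := by
        intro m hm
        have step : (∑ j : Fin b, if (j : ℕ) = m then E else 0) =
            ∑ j : Fin b, if j = (⟨m, hm⟩ : Fin b) then E else 0 :=
          Finset.sum_congr rfl (fun j _ => by congr 1; rw [eq_iff_iff, Fin.ext_iff])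
        rw [step]
        simp
      rw [hsum (l : ℕ) (by omega), hsum (c + k - 1 + (i : ℕ)) (by omega), sub_self]
    · apply Finset.sum_eq_zero
      intro j _
      have hjb := j.isLt
      split_ifs <;> first | ring1 | (exfalso; omega)
  case hrkA =>
    refine ⟨fun s => if (s : ℕ) = k then (1 : K) else 0, ?_⟩
    have hev : ∀ t, MvPolynomial.eval (fun s : Fin (k+1) => if (s : ℕ) = k then (1 : K) else 0)
        (mvar K k t) = if t = k then (1 : K) else 0 := by
      intro t
      rw [eval_mvar]
      by_cases h : t < k + 1
      · rw [dif_pos h]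
      · rw [dif_neg h, if_neg (by omega)]
    apply rank_eq_of_left_inv (C := Matrix.of fun (l : Fin a) (i : Fin b) =>
      if (i : ℕ) = (if (l : ℕ) < c + k - 1 then (l : ℕ) else (l : ℕ) + c) then (1 : K) else 0)
    apply Matrix.ext
    intro l l'
    rw [Matrix.mul_apply, Matrix.one_apply]
    have hlb := l.isLt
    have hlb' := l'.isLt
    have hm : (if (l : ℕ) < c + k - 1 then (l : ℕ) else (l : ℕ) + c) < b := by
      split <;> omega
    rw [Finset.sum_eq_single_of_mem (⟨_, hm⟩ : Fin b) (Finset.mem_univ _)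
      (fun j _ hj => by
        simp only [Matrix.of_apply]
        rw [if_neg (fun h => hj (Fin.val_injective h)), zero_mul])]
    simp only [Matrix.of_apply, Matrix.map_apply]
    simp only [if_true, one_mul, apply_ite (MvPolynomial.eval
      (fun s : Fin (k+1) => if (s : ℕ) = k then (1 : K) else 0)), map_neg, map_zero, hev,
      Fin.ext_iff]
    split_ifs <;> first | rfl | omega | (exfalso; omega) | norm_num
  case hrkB =>
    intro x hx
    classical
    have hne : (Finset.univ.filter (fun s : Fin (k+1) => x s ≠ 0)).Nonempty := by
      obtain ⟨s, hs⟩ := Function.ne_iff.mp hx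
      exact ⟨s, Finset.mem_filter.mpr ⟨Finset.mem_univ _, hs⟩⟩
    set t : Fin (k+1) := (Finset.univ.filter fun s => x s ≠ 0).max' hne with ht
    have hxt : x t ≠ 0 := by
      have := (Finset.univ.filter fun s : Fin (k+1) => x s ≠ 0).max'_mem hne
      rw [Finset.mem_filter] at this
      exact this.2
    have hgt : ∀ s : Fin (k+1), t < s → x s = 0 := by
      intro s hs
      by_contra h
      exact absurd (Finset.le_max' _ s (Finset.mem_filter.mpr ⟨Finset.mem_univ _, h⟩))
        (not_le.mpr hs)
    have htb := t.isLt
    have hκ : ∀ i' : Fin c, (if (t : ℕ) = k then c + k - 1 + (i' : ℕ) else (i' : ℕ) + (t : ℕ)) < b := by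
      intro i'
      have := i'.isLt
      split <;> omega
    apply rank_eq_of_mul_unit (Matrix.of fun (j : Fin b) (i' : Fin c) =>
      if (j : ℕ) = (if (t : ℕ) = k then c + k - 1 + (i' : ℕ) else (i' : ℕ) + (t : ℕ)) then (1 : K) else 0)
    apply isUnit_of_triangular _ (x t) hxt
    · intro i
      have hib := i.isLt
      rw [Matrix.mul_apply,
        Finset.sum_eq_single_of_mem (⟨_, hκ i⟩ : Fin b) (Finset.mem_univ _)
          (fun j _ hj => by
            simp only [Matrix.of_apply]
            rw [if_neg (fun h => hj (Fin.val_injective h)), mul_zero])]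
      simp only [Matrix.map_apply, Matrix.of_apply, if_true, mul_one,
        apply_ite (MvPolynomial.eval x), map_zero, eval_mvar]
      split_ifs <;>
        first
          | rfl
          | omega
          | (exfalso; omega)
          | (exact congrArg x (Fin.ext (by simp only [Fin.val_mk]; omega)))
    · intro i i' hii'
      have hib := i.isLt
      have hib' := i'.isLt
      have hii : (i : ℕ) < (i' : ℕ) := hii'
      rw [Matrix.mul_apply,
        Finset.sum_eq_single_of_mem (⟨_, hκ i'⟩ : Fin b) (Finset.mem_univ _)
          (fun j _ hj => by
            simp only [Matrix.of_apply]
            rw [if_neg (fun h => hj (Fin.val_injective h)), mul_zero])]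
      simp only [Matrix.map_apply, Matrix.of_apply, if_true, mul_one,
        apply_ite (MvPolynomial.eval x), map_zero, eval_mvar]
      split_ifs <;>
        first
          | rfl
          | omega
          | (exfalso; omega)
          | (exact hgt _ (by rw [Fin.lt_def]; simp only [Fin.val_mk]; omega))
end

section
/- Let K be a field, let r ≥ 1 and n, m ≥ 0, and let S = K[x_0,…,x_n,y_0,…,y_m]. Let B = [X_{r,r+n} | Y_{r,r+m}] be the r × (2r+n+m) matrix over S formed by horizontal concatenation, and let A = [Y_{r+n,r+n+m} ; −X_{r+m,r+m+n}] be the (2r+n+m) × (r+n+m) matrix over S formed by vertical concatenation. Then: (i) B·A = 0; (ii) for every (x,y) ∈ K^{n+1} × K^{m+1} with (x,y) ≠ 0, the evaluated matrix B(x,y) has rank r; (iii) at the point x* = (1,0,…,0) ∈ K^{n+1}, y* = (0,…,0,1) ∈ K^{m+1}, the evaluated matrix A(x*,y*) has rank r+n+m. In particular A and B define a monad O_{P^N}(−1)^{r+n+m} →^α O_{P^N}^{2r+n+m} →^β O_{P^N}(1)^r on P^N with N = n+m+1. -/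
/-- The `p × (p + n)` banded matrix whose `(i,j)` entry is `x (j - i)` if
`0 ≤ j - i ≤ n` and `0` otherwise. -/
def bandedMatrix {R : Type*} [CommRing R] (p n : ℕ) (x : Fin (n + 1) → R) :
    Matrix (Fin p) (Fin (p + n)) R :=
  fun i j =>
    if h : (i : ℕ) ≤ (j : ℕ) ∧ (j : ℕ) - (i : ℕ) ≤ n then
      x ⟨(j : ℕ) - (i : ℕ), Nat.lt_succ_of_le h.2⟩
    else 0

/-- The banded matrix `X_{p,p+n}` in the variables `x_0, …, x_n` of
`S = K[x_0, …, x_n, y_0, …, y_m]`. -/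
noncomputable def Xmat (K : Type*) [Field K] (n m p : ℕ) :
    Matrix (Fin p) (Fin (p + n)) (MvPolynomial (Fin (n + 1) ⊕ Fin (m + 1)) K) :=
  bandedMatrix p n (fun i => MvPolynomial.X (Sum.inl i))

/-- The banded matrix `Y_{p,p+m}` in the variables `y_0, …, y_m` of
`S = K[x_0, …, x_n, y_0, …, y_m]`. -/
noncomputable def Ymat (K : Type*) [Field K] (n m p : ℕ) :
    Matrix (Fin p) (Fin (p + m)) (MvPolynomial (Fin (n + 1) ⊕ Fin (m + 1)) K) :=
  bandedMatrix p m (fun j => MvPolynomial.X (Sum.inr j))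

/-!
Read a vector `v ∈ R^q` as the polynomial `v(t) = ∑ vᵢ tⁱ` of degree `< q`. Then
`v ᵥ* X_{p,p+n}` is the coefficient vector of `v(t) x(t)`, where `x(t) = ∑ xᵢ tⁱ`: the banded
matrices are matrices of multiplication by a fixed polynomial. Hence `X Y = Y X` (suitably
sized) because `x(t) y(t) = y(t) x(t)`, which is `B A = 0`; and over a field the rows of
`X_{r,r+n}(x)` are independent as soon as `x ≠ 0`, because `K[t]` is a domain, which gives
`rank B(x,y) = r`. Finally `A(x*, y*)` sends `w ∈ K^{r+n+m}` to its last `r + n` and (up to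
sign) its first `r + m` coordinates, which together are all of them, so it is injective.
-/

open Matrix Polynomial

namespace Matrix

theorem vecMul_submatrix_id {m n o α : Type*} [Fintype m] [NonUnitalNonAssocSemiring α]
    (M : Matrix m n α) (f : o → n) (v : m → α) : v ᵥ* M.submatrix id f = (v ᵥ* M) ∘ f :=
  rfl

variable {K m n : Type*} [Field K] [Fintype m] [Fintype n]

theorem rank_eq_card_height_of_vecMul_eq_zero {M : Matrix m n K}
    (h : ∀ v, v ᵥ* M = 0 → v = 0) : M.rank = Fintype.card m :=
  LinearIndependent.rank_matrix <| Fintype.linearIndependent_iff.2 fun v hv =>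
    congrFun (h v (by rwa [vecMul_eq_sum]))

theorem rank_eq_card_width_of_mulVec_eq_zero {M : Matrix m n K}
    (h : ∀ w, M *ᵥ w = 0 → w = 0) : M.rank = Fintype.card n := by
  rw [← rank_transpose]
  exact rank_eq_card_height_of_vecMul_eq_zero fun w hw => h w (by rwa [vecMul_transpose] at hw)

end Matrix

namespace Polynomial

variable {R : Type*} [CommSemiring R]

noncomputable def ofFinVec (q : ℕ) : (Fin q → R) →ₗ[R] R[X] :=
  Fintype.linearCombination R fun i : Fin q => (X ^ (i : ℕ) : R[X])

theorem ofFinVec_apply {q : ℕ} (v : Fin q → R) :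
    ofFinVec q v = ∑ i, v i • (X ^ (i : ℕ) : R[X]) :=
  Fintype.linearCombination_apply ..

theorem coeff_ofFinVec {q : ℕ} (v : Fin q → R) (k : ℕ) :
    (ofFinVec q v).coeff k = if h : k < q then v ⟨k, h⟩ else 0 := by
  simp only [ofFinVec_apply, finsetSum_coeff, coeff_smul, coeff_X_pow, smul_eq_mul, mul_ite,
    mul_one, mul_zero]
  split_ifs with h
  · rw [Finset.sum_eq_single ⟨k, h⟩ (fun j _ hj => if_neg fun e => hj (Fin.ext e.symm))
      (by simp), if_pos rfl]
  · exact Finset.sum_eq_zero fun j _ => if_neg fun (e : k = j) => h (e ▸ j.isLt)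

theorem ofFinVec_injective {q : ℕ} :
    Function.Injective (ofFinVec q : (Fin q → R) → R[X]) := by
  intro v w h
  funext i
  simpa [coeff_ofFinVec] using congrArg (coeff · i) h

theorem ofFinVec_comp_cast {q q' : ℕ} (h : q = q') (v : Fin q' → R) :
    ofFinVec q (v ∘ Fin.cast h) = ofFinVec q' v := by
  subst h
  rfl

end Polynomial

section CommRing

variable {R : Type*} [CommRing R]

theorem bandedMatrix_map {S : Type*} [CommRing S] (f : R →+* S) (p n : ℕ)
    (x : Fin (n + 1) → R) : (bandedMatrix p n x).map f = bandedMatrix p n (f ∘ x) := by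
  ext i j
  simp only [map_apply, bandedMatrix, apply_dite f, map_zero, Function.comp_apply]

theorem ofFinVec_bandedMatrix_row (p n : ℕ) (x : Fin (n + 1) → R) (i : Fin p) :
    ofFinVec (p + n) (bandedMatrix p n x i) = X ^ (i : ℕ) * ofFinVec (n + 1) x := by
  ext k
  simp only [coeff_ofFinVec, coeff_X_pow_mul', bandedMatrix]
  split_ifs <;> first | rfl | omega

theorem ofFinVec_vecMul_bandedMatrix (p n : ℕ) (x : Fin (n + 1) → R) (v : Fin p → R) :
    ofFinVec (p + n) (v ᵥ* bandedMatrix p n x) = ofFinVec p v * ofFinVec (n + 1) x := by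
  simp only [vecMul_eq_sum, map_sum, map_smul, ofFinVec_bandedMatrix_row, ofFinVec_apply v,
    Finset.sum_mul, smul_mul_assoc]

theorem bandedMatrix_mul_bandedMatrix_comm (p n m : ℕ) (x : Fin (n + 1) → R)
    (y : Fin (m + 1) → R) :
    bandedMatrix p n x * bandedMatrix (p + n) m y =
      bandedMatrix p m y *
        (bandedMatrix (p + m) n x).submatrix id (Fin.cast (Nat.add_right_comm p n m)) := by
  refine vecMul_injective (funext fun v => ofFinVec_injective ?_)
  dsimp only
  rw [← vecMul_vecMul, ← vecMul_vecMul, vecMul_submatrix_id, ofFinVec_comp_cast,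
    ofFinVec_vecMul_bandedMatrix, ofFinVec_vecMul_bandedMatrix, ofFinVec_vecMul_bandedMatrix,
    ofFinVec_vecMul_bandedMatrix]
  ring

theorem fromCols_bandedMatrix_mul_fromRows_bandedMatrix (r n m : ℕ) (x : Fin (n + 1) → R)
    (y : Fin (m + 1) → R) :
    fromCols (bandedMatrix r n x) (bandedMatrix r m y) *
      fromRows (bandedMatrix (r + n) m y)
        ((-bandedMatrix (r + m) n x).submatrix id (Fin.cast (Nat.add_right_comm r n m))) = 0 := by
  rw [fromCols_mul_fromRows, bandedMatrix_mul_bandedMatrix_comm, ← Matrix.mul_add, submatrix_neg,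
    Pi.neg_apply, Pi.neg_apply, add_neg_cancel, Matrix.mul_zero]

theorem eq_zero_of_vecMul_bandedMatrix_eq_zero [IsDomain R] {p n : ℕ} {x : Fin (n + 1) → R}
    (hx : x ≠ 0) {v : Fin p → R} (hv : v ᵥ* bandedMatrix p n x = 0) : v = 0 := by
  have hpoly := congrArg (ofFinVec (p + n)) hv
  rw [ofFinVec_vecMul_bandedMatrix, map_zero, mul_eq_zero,
    map_eq_zero_iff _ ofFinVec_injective, map_eq_zero_iff _ ofFinVec_injective] at hpoly
  exact hpoly.resolve_right hx

theorem bandedMatrix_single_zero_mulVec (p n : ℕ) (w : Fin (p + n) → R) :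
    bandedMatrix p n (Pi.single 0 1) *ᵥ w = w ∘ Fin.castAdd n := by
  funext i
  refine (Fintype.sum_eq_single (Fin.castAdd n i) fun j hj => ?_).trans ?_
  · rw [Ne, Fin.ext_iff, Fin.val_castAdd] at hj
    simp only [bandedMatrix, Pi.single_apply, Fin.ext_iff, Fin.val_zero]
    split_ifs <;> first | omega | simp
  · simp [bandedMatrix, Pi.single_apply]

theorem bandedMatrix_single_last_mulVec (p n : ℕ) (w : Fin (p + n) → R) :
    bandedMatrix p n (Pi.single (Fin.last n) 1) *ᵥ w = w ∘ (Fin.addNat · n) := by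
  funext i
  refine (Fintype.sum_eq_single (Fin.addNat i n) fun j hj => ?_).trans ?_
  · rw [Ne, Fin.ext_iff, Fin.val_addNat] at hj
    simp only [bandedMatrix, Pi.single_apply, Fin.ext_iff, Fin.val_last]
    split_ifs <;> first | omega | simp
  · simp [bandedMatrix, Pi.single_apply, Fin.ext_iff]

theorem eq_zero_of_fromRows_bandedMatrix_single_mulVec_eq_zero (r n m : ℕ)
    {w : Fin (r + n + m) → R}
    (hw : fromRows (bandedMatrix (r + n) m (Pi.single (Fin.last m) 1))
      ((-bandedMatrix (r + m) n (Pi.single 0 1)).submatrix id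
        (Fin.cast (Nat.add_right_comm r n m))) *ᵥ w = 0) : w = 0 := by
  rw [fromRows_mulVec,
    show Fin.cast (Nat.add_right_comm r n m) = finCongr (Nat.add_right_comm r n m) from rfl,
    submatrix_mulVec_equiv, neg_mulVec, bandedMatrix_single_zero_mulVec,
    bandedMatrix_single_last_mulVec, ← Sum.elim_zero_zero, Sum.elim_eq_iff] at hw
  obtain ⟨high, low⟩ := hw
  funext k
  by_cases hk : (k : ℕ) < r + m
  · simpa [Fin.cast_mk] using congrFun low ⟨k, hk⟩
  · have hk' : (⟨k - m, by omega⟩ : Fin (r + n)).addNat m = k := Fin.ext (by simp; omega)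
    simpa [hk'] using congrFun high ⟨k - m, by omega⟩

end CommRing

section Field

variable {K : Type*} [Field K]

theorem rank_fromCols_bandedMatrix {r n m : ℕ} {x : Fin (n + 1) → K} {y : Fin (m + 1) → K}
    (hxy : ¬(x = 0 ∧ y = 0)) :
    (fromCols (bandedMatrix r n x) (bandedMatrix r m y)).rank = r := by
  refine (rank_eq_card_height_of_vecMul_eq_zero fun v hv => ?_).trans (Fintype.card_fin r)
  rw [vecMul_fromCols, ← Sum.elim_zero_zero, Sum.elim_eq_iff] at hv
  by_cases hx : x = 0
  · exact eq_zero_of_vecMul_bandedMatrix_eq_zero (fun hy => hxy ⟨hx, hy⟩) hv.2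
  · exact eq_zero_of_vecMul_bandedMatrix_eq_zero hx hv.1

theorem rank_fromRows_bandedMatrix_single (r n m : ℕ) :
    (fromRows (bandedMatrix (r + n) m (Pi.single (Fin.last m) (1 : K)))
      ((-bandedMatrix (r + m) n (Pi.single 0 1)).submatrix id
        (Fin.cast (Nat.add_right_comm r n m)))).rank = r + n + m :=
  (rank_eq_card_width_of_mulVec_eq_zero fun _ =>
    eq_zero_of_fromRows_bandedMatrix_single_mulVec_eq_zero r n m).trans (Fintype.card_fin _)

variable {n m : ℕ} (x : Fin (n + 1) → K) (y : Fin (m + 1) → K)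

theorem Xmat_map_eval (p : ℕ) :
    (Xmat K n m p).map (MvPolynomial.eval (Sum.elim x y)) = bandedMatrix p n x := by
  rw [Xmat, bandedMatrix_map]
  congr 1
  funext i
  simp

theorem Ymat_map_eval (p : ℕ) :
    (Ymat K n m p).map (MvPolynomial.eval (Sum.elim x y)) = bandedMatrix p m y := by
  rw [Ymat, bandedMatrix_map]
  congr 1
  funext i
  simp

end Field

/-- `B = [X_{r,r+n} | Y_{r,r+m}]` and `A = [Y_{r+n,r+n+m} ; -X_{r+m,r+m+n}]` satisfy
`B · A = 0`; `B` has rank `r` at every nonzero point `(x,y)`; and `A` has full column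
rank `r+n+m` at the point `x* = (1,0,…,0)`, `y* = (0,…,0,1)`.  Hence `A` and `B` define
a monad `O(-1)^{r+n+m} → O^{2r+n+m} → O(1)^r` on `P^N`, `N = n+m+1`. -/
theorem monad_construction (K : Type*) [Field K] (r n m : ℕ) :
    let B : Matrix (Fin r) (Fin (r + n) ⊕ Fin (r + m))
        (MvPolynomial (Fin (n + 1) ⊕ Fin (m + 1)) K) :=
      Matrix.fromCols (Xmat K n m r) (Ymat K n m r)
    let A : Matrix (Fin (r + n) ⊕ Fin (r + m)) (Fin (r + n + m))
        (MvPolynomial (Fin (n + 1) ⊕ Fin (m + 1)) K) :=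
      Matrix.fromRows (Ymat K n m (r + n))
        ((-(Xmat K n m (r + m))).submatrix id
          (Fin.cast (show r + n + m = r + m + n by omega)))
    B * A = 0 ∧
    (∀ (x : Fin (n + 1) → K) (y : Fin (m + 1) → K), ¬(x = 0 ∧ y = 0) →
      (B.map (MvPolynomial.eval (Sum.elim x y))).rank = r) ∧
    (A.map (MvPolynomial.eval (Sum.elim
        (fun i : Fin (n + 1) => if i = 0 then (1 : K) else 0)
        (fun j : Fin (m + 1) => if j = Fin.last m then (1 : K) else 0)))).rank
      = r + n + m := by
  intro B A
  have hx : (fun i : Fin (n + 1) => if i = 0 then (1 : K) else 0) = Pi.single 0 1 := by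
    funext i
    simp [Pi.single_apply]
  have hy : (fun j : Fin (m + 1) => if j = Fin.last m then (1 : K) else 0) =
      Pi.single (Fin.last m) 1 := by
    funext j
    simp [Pi.single_apply]
  refine ⟨fromCols_bandedMatrix_mul_fromRows_bandedMatrix r n m _ _, fun x y hxy => ?_, ?_⟩
  · rw [fromCols_map, Xmat_map_eval, Ymat_map_eval]
    exact rank_fromCols_bandedMatrix hxy
  · rw [hx, hy, fromRows_map, ← submatrix_map, Matrix.map_neg _ (map_neg _), Xmat_map_eval,
      Ymat_map_eval]
    exact rank_fromRows_bandedMatrix_single r n m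
end
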